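/- Let G be a group with a right action r on a type F, let g and g' be G-transitions on (U, j) and (U', j') over the same base type B, with j' surjective, and let b be a G-transition morphism from g to g'. Let E = (F × U)/~, E' = (F × U')/~' be the associated quotients, with quotient maps ⟦·⟧, ⟦·⟧' and projections p, p'. Then there exists a unique function f : E → E' such that f ⟦(w, x)⟧ = ⟦(r w (b x x'), x')⟧' for all w in F and all x in U, x' in U' with j x = j' x'; moreover p' (f e) = p e for every e in E. -/
import Mathlib


universe u

/-- A right action of a group `G` on a type `F`. -/
structure RightAction (G : Type u) [Group G] (F : Type u) where
  r : F → G → F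
  r_one : ∀ w : F, r w 1 = w
  r_mul : ∀ (w : F) (a c : G), r (r w a) c = r w (a * c)

/-- A `G`-transition on a cover `j : U → B`. -/
structure GTransition (G : Type u) [Group G] {U B : Type u} (j : U → B) where
  g : ∀ x y : U, j x = j y → G
  cocycle : ∀ (x y z : U) (hxy : j x = j y) (hyz : j y = j z),
    g x y hxy * g y z hyz = g x z (hxy.trans hyz)

/-- A `G`-transition morphism between `G`-transitions over the same base. -/
structure GTransMor {G : Type u} [Group G] {B U U' : Type u} {j : U → B} {j' : U' → B}
    (t : GTransition G j) (t' : GTransition G j') where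
  b : ∀ (x : U) (x' : U'), j x = j' x' → G
  sigma : ∀ (x y : U) (x' : U') (hxy : j x = j y) (hyx' : j y = j' x'),
    t.g x y hxy * b y x' hyx' = b x x' (hxy.trans hyx')
  delta : ∀ (x : U) (x' y' : U') (hxx' : j x = j' x') (hx'y' : j' x' = j' y'),
    b x x' hxx' * t'.g x' y' hx'y' = b x y' (hxx'.trans hx'y')

/-- The relation `(w, x) ~ (v, y) iff j x = j y and v = r w (g x y)` on `F × U`. -/
def bundleRel {G F U B : Type u} [Group G] (ρ : RightAction G F) {j : U → B}
    (t : GTransition G j) : F × U → F × U → Prop :=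
  fun p q => ∃ h : j p.2 = j q.2, q.1 = ρ.r p.1 (t.g p.2 q.2 h)

/-- The projection of the associated quotient bundle, determined by `p ⟦(w, x)⟧ = j x`. -/
def quotProj {G F U B : Type u} [Group G] (ρ : RightAction G F) {j : U → B}
    (t : GTransition G j) : Quot (bundleRel ρ t) → B :=
  Quot.lift (fun wx : F × U => j wx.2) (fun _ _ hab => by
    obtain ⟨h, -⟩ := hab; exact h)

/-- there is a unique function `f : E → E'` between the associated
quotient bundles with `f ⟦(w, x)⟧ = ⟦(r w (b x x'), x')⟧'` whenever `j x = j' x'`;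
moreover `p' (f e) = p e` for every `e`. -/
theorem stmt3 {G F U U' B : Type u} [Group G] (ρ : RightAction G F)
    {j : U → B} {j' : U' → B} {t : GTransition G j} {t' : GTransition G j'}
    (hj' : Function.Surjective j') (bb : GTransMor t t') :
    ∃ f : Quot (bundleRel ρ t) → Quot (bundleRel ρ t'),
      (∀ (w : F) (x : U) (x' : U') (h : j x = j' x'),
        f (Quot.mk (bundleRel ρ t) (w, x)) =
          Quot.mk (bundleRel ρ t') (ρ.r w (bb.b x x' h), x')) ∧
      (∀ e : Quot (bundleRel ρ t), quotProj ρ t' (f e) = quotProj ρ t e) ∧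
      ∀ f₂ : Quot (bundleRel ρ t) → Quot (bundleRel ρ t'),
        (∀ (w : F) (x : U) (x' : U') (h : j x = j' x'),
          f₂ (Quot.mk (bundleRel ρ t) (w, x)) =
            Quot.mk (bundleRel ρ t') (ρ.r w (bb.b x x' h), x')) →
        f₂ = f := by
  classical
  -- key lemma: value independent of choice of x'
  have key : ∀ (w : F) (x : U) (x' y' : U') (h : j x = j' x') (h2 : j x = j' y'),
      Quot.mk (bundleRel ρ t') (ρ.r w (bb.b x x' h), x') =
        Quot.mk (bundleRel ρ t') (ρ.r w (bb.b x y' h2), y') := by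
    intro w x x' y' h h2
    apply Quot.sound
    refine ⟨h.symm.trans h2, ?_⟩
    rw [ρ.r_mul, bb.delta x x' y' h (h.symm.trans h2)]
  choose c hc using hj'
  refine ⟨Quot.lift (fun wx : F × U =>
      Quot.mk (bundleRel ρ t') (ρ.r wx.1 (bb.b wx.2 (c (j wx.2)) (hc (j wx.2)).symm),
        c (j wx.2)))
    ?_, ?_, ?_, ?_⟩
  · rintro ⟨w, x⟩ ⟨v, y⟩ ⟨h, hv⟩
    dsimp only at hv ⊢
    rw [hv, ρ.r_mul, bb.sigma x y (c (j y)) h (hc (j y)).symm]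
    exact key w x (c (j x)) (c (j y)) _ _
  · intro w x x' h
    exact key w x (c (j x)) x' _ h
  · intro e
    induction e using Quot.ind with
    | _ wx => exact hc (j wx.2)
  · intro f₂ hf₂
    funext e
    induction e using Quot.ind with
    | _ wx => exact hf₂ wx.1 wx.2 (c (j wx.2)) (hc (j wx.2)).symm
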